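/- arXiv:2203.01694 — 4 statements merged into one kernel-verified Lean document; each statement's English description precedes it below -/
import Mathlib

section
/- Three pairwise disjoint lines in P^3 lie on a unique quadric surface, and this quadric is smooth. -/
/-!
Projecting onto `W₃` along `W₂` and along `W₁` identifies `ℂ⁴` with `W₃ × W₃ ≅ ℂ² × ℂ²`, and in
these coordinates the three lines become `ℂ² × 0`, `0 × ℂ²` and the diagonal. A quadratic form
`Q` vanishing on the first two satisfies `Q (a, b) = β a b` for the bilinear form
`β a b = polar Q (a, 0) (0, b)`; vanishing on the diagonal makes `β` alternating, hence a multiple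
of the `2 × 2` determinant. So every quadric through the three lines is a multiple of
`(a, b) ↦ a₀ b₁ - a₁ b₀`, whose polar form is nondegenerate, which is smoothness.
-/

open MvPolynomial QuadraticMap Module

namespace MvPolynomial

variable {R σ : Type*} [CommRing R]

theorem homogeneousSubmodule_two_eq_span :
    homogeneousSubmodule σ R 2 =
      Submodule.span R (Set.range fun ij : σ × σ => X ij.1 * X ij.2) := by
  rw [← homogeneousSubmodule_one_pow, homogeneousSubmodule_one_eq_span_X, pow_two,
    Submodule.span_mul_span]
  congr 1
  ext p
  simp [Set.mem_mul]

theorem IsHomogeneous.exists_quadraticMap_eval_eq {q : MvPolynomial σ R}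
    (hq : q.IsHomogeneous 2) : ∃ Q : QuadraticMap R (σ → R) R, ∀ x, Q x = eval x q := by
  rw [← mem_homogeneousSubmodule, homogeneousSubmodule_two_eq_span] at hq
  induction hq using Submodule.span_induction with
  | mem p hp =>
    obtain ⟨⟨i, j⟩, rfl⟩ := hp
    exact ⟨linMulLin (LinearMap.proj i) (LinearMap.proj j), fun x => by simp⟩
  | zero => exact ⟨0, fun x => by simp⟩
  | add p p' _ _ hp hp' =>
    obtain ⟨Q, hQ⟩ := hp
    obtain ⟨Q', hQ'⟩ := hp'
    exact ⟨Q + Q', fun x => by simp [hQ, hQ']⟩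
  | smul c p _ hp =>
    obtain ⟨Q, hQ⟩ := hp
    exact ⟨c • Q, fun x => by simp [hQ]⟩

theorem exists_isHomogeneous_two_eval_eq [Fintype σ] [DecidableEq σ]
    (Q : QuadraticMap R (σ → R) R) :
    ∃ q : MvPolynomial σ R, q.IsHomogeneous 2 ∧ (∀ x, eval x q = Q x) ∧
      ∀ x y, polar Q x y = ∑ i, y i * eval x (pderiv i q) := by
  obtain ⟨B, rfl⟩ := LinearMap.BilinMap.toQuadraticMap_surjective Q
  set b : σ → σ → R := fun i j => B (Pi.single i 1) (Pi.single j 1)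
  have hB : ∀ x y, B x y = ∑ i, ∑ j, b i j * x i * y j := by
    intro x y
    rw [← LinearMap.sum_repr_mul_repr_mul (Pi.basisFun R σ) (Pi.basisFun R σ) x y]
    simp [Finsupp.sum_fintype, b]
    exact Finset.sum_congr rfl fun i _ => Finset.sum_congr rfl fun j _ => by ring
  refine ⟨∑ i, ∑ j, C (b i j) * X i * X j, ?_, fun x => ?_, fun x y => ?_⟩
  · exact IsHomogeneous.sum _ _ _ fun i _ => IsHomogeneous.sum _ _ _ fun j _ =>
      (isHomogeneous_C_mul_X _ i).mul (isHomogeneous_X R j)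
  · simp [hB x x]
  · have hpderiv : ∀ k, eval x (pderiv k (∑ i, ∑ j, C (b i j) * X i * X j)) =
        ∑ j, b k j * x j + ∑ i, b i k * x i := by
      intro k
      simp [pderiv_X, Pi.single_apply, Finset.sum_add_distrib, mul_comm, add_comm]
    simp only [LinearMap.BilinMap.polar_toQuadraticMap, hB, hpderiv, mul_add,
      Finset.sum_add_distrib, Finset.mul_sum]
    rw [add_comm]
    congr 1
    · exact Finset.sum_congr rfl fun i _ => Finset.sum_congr rfl fun j _ => by ring
    · rw [Finset.sum_comm]
      exact Finset.sum_congr rfl fun i _ => Finset.sum_congr rfl fun j _ => by ring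

end MvPolynomial

section PairDet

variable {R : Type*} [CommRing R]

theorem LinearMap.IsAlt.apply_eq_mul_fin_two {β : (Fin 2 → R) →ₗ[R] (Fin 2 → R) →ₗ[R] R}
    (hβ : β.IsAlt) (a b : Fin 2 → R) :
    β a b = β (Pi.single 0 1) (Pi.single 1 1) * (a 0 * b 1 - a 1 * b 0) := by
  rw [← LinearMap.sum_repr_mul_repr_mul (Pi.basisFun R (Fin 2)) (Pi.basisFun R (Fin 2)) a b]
  simp [Finsupp.sum_fintype, Fin.sum_univ_two, hβ.self_eq_zero, ← hβ.neg (Pi.single 1 1)]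
  ring

def pairDet : QuadraticMap R ((Fin 2 → R) × (Fin 2 → R)) R :=
  linMulLin (.proj 0 ∘ₗ .fst R _ _) (.proj 1 ∘ₗ .snd R _ _) -
    linMulLin (.proj 1 ∘ₗ .fst R _ _) (.proj 0 ∘ₗ .snd R _ _)

@[simp]
theorem pairDet_apply (x : (Fin 2 → R) × (Fin 2 → R)) :
    pairDet x = x.1 0 * x.2 1 - x.1 1 * x.2 0 := rfl

theorem polar_pairDet (x y : (Fin 2 → R) × (Fin 2 → R)) :
    polar pairDet x y = x.1 0 * y.2 1 - x.1 1 * y.2 0 + (y.1 0 * x.2 1 - y.1 1 * x.2 0) := by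
  simp only [polar, pairDet_apply, Prod.fst_add, Prod.snd_add, Pi.add_apply]
  ring

theorem eq_zero_of_forall_polar_pairDet_eq_zero {x : (Fin 2 → R) × (Fin 2 → R)}
    (h : ∀ y, polar pairDet x y = 0) : x = 0 := by
  have h₁ := h (0, Pi.single 1 1)
  have h₂ := h (0, Pi.single 0 1)
  have h₃ := h (Pi.single 0 1, 0)
  have h₄ := h (Pi.single 1 1, 0)
  simp [polar_pairDet] at h₁ h₂ h₃ h₄
  ext i <;> fin_cases i <;> simp [h₁, h₂, h₃, h₄]

theorem exists_eq_mul_pairDet (Q : QuadraticMap R ((Fin 2 → R) × (Fin 2 → R)) R)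
    (h₁ : ∀ a, Q (a, 0) = 0) (h₂ : ∀ b, Q (0, b) = 0) (h₃ : ∀ a, Q (a, a) = 0) :
    ∃ c, ∀ x, Q x = c * pairDet x := by
  set β := (polarBilin Q).compl₁₂ (.inl R _ _) (.inr R _ _)
  have hβ : ∀ a b, β a b = Q (a, b) := fun a b => by
    simp [β, polar, h₁, h₂]
  have hβ_alt : β.IsAlt := fun a => (hβ a a).trans (h₃ a)
  refine ⟨β (Pi.single 0 1) (Pi.single 1 1), fun x => ?_⟩
  rw [← hβ, hβ_alt.apply_eq_mul_fin_two, pairDet_apply]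

end PairDet

section Lines

variable {K V : Type*} [Field K] [AddCommGroup V] [Module K V]

theorem exists_linearEquiv_prod_of_pairwise_inf_eq_bot {W₁ W₂ W₃ : Submodule K V}
    (hV : finrank K V = 4) (h₁ : finrank K W₁ = 2) (h₂ : finrank K W₂ = 2)
    (h₃ : finrank K W₃ = 2) (h₁₂ : W₁ ⊓ W₂ = ⊥) (h₁₃ : W₁ ⊓ W₃ = ⊥) (h₂₃ : W₂ ⊓ W₃ = ⊥) :
    ∃ Φ : V ≃ₗ[K] (Fin 2 → K) × (Fin 2 → K),
      (∀ x, x ∈ W₁ ↔ (Φ x).2 = 0) ∧ (∀ x, x ∈ W₂ ↔ (Φ x).1 = 0) ∧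
      ∀ x, x ∈ W₃ ↔ (Φ x).1 = (Φ x).2 := by
  have : FiniteDimensional K V := finite_of_finrank_eq_succ hV
  have isCompl_W₃ : ∀ {W : Submodule K V}, finrank K W = 2 → W ⊓ W₃ = ⊥ → IsCompl W₃ W :=
    fun hW h => (Submodule.isCompl_iff_disjoint _ _ (by omega)).2
      (disjoint_iff.2 (inf_comm _ W₃ ▸ h))
  set f := W₃.projectionOnto W₂ (isCompl_W₃ h₂ h₂₃)
  set g := W₃.projectionOnto W₁ (isCompl_W₃ h₁ h₁₃)
  have hf : ∀ x, f x = 0 ↔ x ∈ W₂ := fun x => Submodule.projectionOnto_apply_eq_zero_iff _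
  have hg : ∀ x, g x = 0 ↔ x ∈ W₁ := fun x => Submodule.projectionOnto_apply_eq_zero_iff _
  have hfg : ∀ x, f x = g x ↔ x ∈ W₃ := by
    refine fun x => ⟨fun h => ?_, fun hx => ?_⟩
    · have hmem : x - f x ∈ W₁ ⊓ W₂ := by
        refine ⟨(hg _).1 ?_, (hf _).1 ?_⟩
        · rw [map_sub, h, Submodule.projectionOnto_apply_left, sub_self]
        · rw [map_sub, Submodule.projectionOnto_apply_left, sub_self]
      rw [h₁₂, Submodule.mem_bot, sub_eq_zero] at hmem
      exact hmem ▸ (f x).2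
    · rw [Submodule.projectionOnto_apply_of_mem_left _ hx,
        Submodule.projectionOnto_apply_of_mem_left _ hx]
  have hinj : Function.Injective (f.prod g) := by
    rw [← LinearMap.ker_eq_bot, eq_bot_iff]
    intro x hx
    simp only [LinearMap.mem_ker, LinearMap.prod_apply, Function.prod, Prod.mk_eq_zero, hf,
      hg] at hx
    rw [← h₁₂]
    exact ⟨hx.2, hx.1⟩
  have hbij : Function.Bijective (f.prod g) :=
    ⟨hinj, (LinearMap.injective_iff_surjective_of_finrank_eq_finrank (by simp [hV, h₃])).1 hinj⟩
  let e := (finBasisOfFinrankEq K W₃ h₃).equivFun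
  refine ⟨(LinearEquiv.ofBijective _ hbij).trans (e.prodCongr e), fun x => ?_, fun x => ?_,
    fun x => ?_⟩ <;> simp [← hf, ← hg, ← hfg]

end Lines

/-- Three pairwise disjoint lines in ℙ³ lie on a unique quadric surface,
and this quadric is smooth.

Lines are 2-dimensional linear subspaces of ℂ⁴ (disjoint in ℙ³ means trivially
intersecting subspaces); a quadric surface is the vanishing set of a nonzero homogeneous
degree-2 polynomial; smoothness means the gradient is nonzero at every point of the
quadric; uniqueness means every quadric surface containing the three lines has the same
zero set. -/
theorem stmt_11 (W₁ W₂ W₃ : Submodule ℂ (Fin 4 → ℂ))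
    (h1 : Module.finrank ℂ W₁ = 2) (h2 : Module.finrank ℂ W₂ = 2)
    (h3 : Module.finrank ℂ W₃ = 2)
    (h12 : W₁ ⊓ W₂ = ⊥) (h13 : W₁ ⊓ W₃ = ⊥) (h23 : W₂ ⊓ W₃ = ⊥) :
    ∃ q : MvPolynomial (Fin 4) ℂ, q ≠ 0 ∧ q.IsHomogeneous 2 ∧
      (∀ w ∈ W₁, MvPolynomial.eval w q = 0) ∧
      (∀ w ∈ W₂, MvPolynomial.eval w q = 0) ∧
      (∀ w ∈ W₃, MvPolynomial.eval w q = 0) ∧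
      -- the quadric is smooth
      (∀ x : Fin 4 → ℂ, x ≠ 0 → MvPolynomial.eval x q = 0 →
        ∃ i : Fin 4, MvPolynomial.eval x (MvPolynomial.pderiv i q) ≠ 0) ∧
      -- the quadric surface is unique
      (∀ q' : MvPolynomial (Fin 4) ℂ, q' ≠ 0 → q'.IsHomogeneous 2 →
        (∀ w ∈ W₁, MvPolynomial.eval w q' = 0) →
        (∀ w ∈ W₂, MvPolynomial.eval w q' = 0) →
        (∀ w ∈ W₃, MvPolynomial.eval w q' = 0) →
        {x : Fin 4 → ℂ | MvPolynomial.eval x q' = 0}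
          = {x : Fin 4 → ℂ | MvPolynomial.eval x q = 0}) := by
  obtain ⟨Φ, hW₁, hW₂, hW₃⟩ :=
    exists_linearEquiv_prod_of_pairwise_inf_eq_bot (by simp) h1 h2 h3 h12 h13 h23
  obtain ⟨q, hq_hom, hq_eval, hq_polar⟩ :=
    exists_isHomogeneous_two_eval_eq (pairDet.comp Φ.toLinearMap)
  refine ⟨q, ?_, hq_hom, fun w hw => ?_, fun w hw => ?_, fun w hw => ?_, ?_, ?_⟩
  · rintro rfl
    simpa using hq_eval (Φ.symm (Pi.single 0 1, Pi.single 1 1))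
  · simp [hq_eval, (hW₁ w).1 hw]
  · simp [hq_eval, (hW₂ w).1 hw]
  · simp [hq_eval, (hW₃ w).1 hw, mul_comm]
  · intro x hx _
    by_contra! hcrit
    refine hx (Φ.map_eq_zero_iff.1 (eq_zero_of_forall_polar_pairDet_eq_zero fun y => ?_))
    simpa [hcrit, polar] using hq_polar x (Φ.symm y)
  · intro q' hq' hq'_hom hq'₁ hq'₂ hq'₃
    obtain ⟨Q', hQ'⟩ := hq'_hom.exists_quadraticMap_eval_eq
    obtain ⟨c, hc⟩ := exists_eq_mul_pairDet (Q'.comp Φ.symm.toLinearMap)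
      (fun a => by simp [hQ', hq'₁, hW₁]) (fun b => by simp [hQ', hq'₂, hW₂])
      (fun a => by simp [hQ', hq'₃, hW₃])
    have heval : ∀ x, eval x q' = c * eval x q := fun x => by
      simpa [hQ', hq_eval] using hc (Φ x)
    have hc₀ : c ≠ 0 := by
      rintro rfl
      exact hq' (funext fun x => by simp [heval])
    ext x
    simp [heval, hc₀]
end

section
/- Let L₁,…,L_k be lines in P^3. They have infinitely many common transversals if and only if they have at least three distinct common transversals. -/
/-!
If two common transversals `O, O'` meet, they meet in a point `P` and span a plane `H`; a line
meeting both either passes through `P` or lies in `H`, so each of the infinitely many lines through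
`P` in `H` is again a common transversal.

Otherwise there are three pairwise skew common transversals `O₁, O₂, O₃`. Then `V = O₁ ⊕ O₂`, and
with the two projections `π₁, π₂` the lines `(π₁ + r π₂) O₃`, `r ∈ K`, form the ruling containing
`O₁, O₂, O₃` of the quadric through them. A line meeting `O₁` and `O₂` is spanned by the two
intersection points, hence stable under `π₁` and `π₂`; if it also meets `O₃` in `w ≠ 0`, it
contains `(π₁ + r π₂) w ≠ 0` for every `r`.
-/

open Submodule Module

variable {K V : Type*} [Field K] [AddCommGroup V] [Module K V]

def commonTransversals {ι : Type*} (L : ι → Submodule K V) : Set (Submodule K V) :=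
  {W | finrank K W = 2 ∧ ∀ i, W ⊓ L i ≠ ⊥}

namespace Submodule

theorem finrank_span_pair {x y : V} (h : LinearIndependent K ![x, y]) :
    finrank K (span K {x, y}) = 2 := by
  rw [← Matrix.range_cons_cons_empty x y ![], finrank_span_eq_card h, Fintype.card_fin]

theorem eq_zero_of_smul_add_smul_add_smul_eq_zero {p q r : V} (hpq : LinearIndependent K ![p, q])
    (hr : r ∉ span K {p, q}) {a b c : K} (h : a • p + b • q + c • r = 0) :
    a = 0 ∧ b = 0 ∧ c = 0 := by
  obtain rfl : c = 0 := by
    by_contra hc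
    refine hr ((smul_mem_iff _ hc).1 ?_)
    rw [eq_neg_of_add_eq_zero_right h]
    exact neg_mem (add_mem (smul_mem _ _ (subset_span (by simp)))
      (smul_mem _ _ (subset_span (by simp))))
  obtain ⟨rfl, rfl⟩ := LinearIndependent.pair_iff.1 hpq a b (by simpa using h)
  exact ⟨rfl, rfl, rfl⟩

theorem linearIndependent_pair_add_smul {p q r : V} (hpq : LinearIndependent K ![p, q])
    (hr : r ∉ span K {p, q}) (t : K) : LinearIndependent K ![p, q + t • r] :=
  LinearIndependent.pair_iff.2 fun a b h =>
    have := eq_zero_of_smul_add_smul_add_smul_eq_zero hpq hr (c := b * t)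
      (by linear_combination (norm := module) h)
    ⟨this.1, this.2.1⟩

theorem span_pair_add_smul_injective {p q r : V} (hpq : LinearIndependent K ![p, q])
    (hr : r ∉ span K {p, q}) : Function.Injective fun t : K => span K {p, q + t • r} := by
  intro t s (hts : span K {p, q + t • r} = span K {p, q + s • r})
  have hmem : q + t • r ∈ span K {p, q + s • r} := hts ▸ subset_span (by simp)
  obtain ⟨a, b, hab⟩ := mem_span_pair.1 hmem
  obtain ⟨-, hb, hst⟩ := eq_zero_of_smul_add_smul_add_smul_eq_zero hpq hr (a := a) (b := b - 1)
    (c := b * s - t) (by linear_combination (norm := module) hab)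
  rw [sub_eq_zero.1 hb, one_mul] at hst
  exact (sub_eq_zero.1 hst).symm

section FiniteDimensional

variable [FiniteDimensional K V]

theorem inf_ne_bot_of_finrank_sup_lt {W L : Submodule K V}
    (h : finrank K ↥(W ⊔ L) < finrank K W + finrank K L) : W ⊓ L ≠ ⊥ := by
  intro hbot
  have := finrank_sup_add_finrank_inf_eq W L
  rw [hbot, finrank_bot] at this
  omega

theorem finrank_inf_lt_of_ne {O O' : Submodule K V} (hOO' : finrank K O = finrank K O')
    (hne : O ≠ O') : finrank K ↥(O ⊓ O') < finrank K O := by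
  by_contra! h
  exact hne ((eq_of_le_of_finrank_le inf_le_left h).symm.trans
    (eq_of_le_of_finrank_le inf_le_right (hOO' ▸ h)))

theorem eq_of_le_of_ne_bot_of_finrank_le_one {S T : Submodule K V} (hST : S ≤ T) (hS : S ≠ ⊥)
    (hT : finrank K T ≤ 1) : S = T :=
  eq_of_le_of_finrank_le hST (hT.trans (one_le_finrank_iff.2 hS))

theorem inf_le_or_le_sup_of_inf_ne_bot {O O' L : Submodule K V}
    (hOO' : finrank K ↥(O ⊓ O') ≤ 1) (hL : finrank K L = 2) (hO : O ⊓ L ≠ ⊥)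
    (hO' : O' ⊓ L ≠ ⊥) : O ⊓ O' ≤ L ∨ L ≤ O ⊔ O' := by
  by_cases hspan : O ⊓ L ⊔ O' ⊓ L = L
  · exact Or.inr (hspan ▸ sup_le_sup inf_le_left inf_le_left)
  have hpoint : finrank K ↥(O ⊓ L ⊔ O' ⊓ L) ≤ 1 := by
    have := finrank_lt_finrank_of_lt (lt_of_le_of_ne (sup_le inf_le_right inf_le_right) hspan)
    omega
  have hsame : O ⊓ L = O' ⊓ L :=
    (eq_of_le_of_ne_bot_of_finrank_le_one le_sup_left hO hpoint).trans
      (eq_of_le_of_ne_bot_of_finrank_le_one le_sup_right hO' hpoint).symm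
  have hle : O ⊓ L ≤ O ⊓ O' := le_inf inf_le_left (hsame.le.trans inf_le_left)
  exact Or.inl ((eq_of_le_of_ne_bot_of_finrank_le_one hle hO hOO').ge.trans inf_le_right)

theorem exists_linearIndependent_pair_span_eq {O : Submodule K V} (hO : finrank K O = 2)
    {p : V} (hp : p ∈ O) (hp0 : p ≠ 0) :
    ∃ q ∈ O, LinearIndependent K ![p, q] ∧ span K {p, q} = O := by
  have hlt : span K {p} < O := by
    refine lt_of_le_of_ne (span_singleton_le_iff_mem _ _ |>.2 hp) fun h => ?_
    have := finrank_span_singleton (K := K) hp0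
    rw [h, hO] at this
    omega
  obtain ⟨q, hq, hqp⟩ := SetLike.exists_of_lt hlt
  have hpq : LinearIndependent K ![p, q] :=
    (LinearIndependent.pair_iff' hp0).2 fun a h =>
      hqp (h ▸ smul_mem _ _ (mem_span_singleton_self p))
  refine ⟨q, hq, hpq, eq_of_le_of_finrank_eq (span_le.2 ?_) (by rw [finrank_span_pair hpq, hO])⟩
  rintro _ (rfl | rfl | _) <;> assumption

theorem infinite_setOf_mem_le_sup [Infinite K] {O O' : Submodule K V} (hO : finrank K O = 2)
    (hO' : ¬O' ≤ O) {p : V} (hp : p ∈ O) (hp0 : p ≠ 0) :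
    {W : Submodule K V | finrank K W = 2 ∧ p ∈ W ∧ W ≤ O ⊔ O'}.Infinite := by
  obtain ⟨q, hq, hpq, rfl⟩ := exists_linearIndependent_pair_span_eq hO hp hp0
  obtain ⟨r, hr, hrO⟩ := SetLike.not_le_iff_exists.1 hO'
  refine Set.infinite_of_injective_forall_mem (span_pair_add_smul_injective hpq hrO) fun t =>
    ⟨finrank_span_pair (linearIndependent_pair_add_smul hpq hrO t), subset_span (by simp),
      span_le.2 ?_⟩
  rintro _ (rfl | rfl | _)
  · exact mem_sup_left hp
  · exact add_mem (mem_sup_left hq) (mem_sup_right (smul_mem _ _ hr))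

end FiniteDimensional

end Submodule

theorem commonTransversals_infinite_of_not_disjoint [FiniteDimensional K V] [Infinite K]
    {ι : Type*} {L : ι → Submodule K V} (hL : ∀ i, finrank K (L i) = 2)
    {O O' : Submodule K V} (hO : O ∈ commonTransversals L) (hO' : O' ∈ commonTransversals L)
    (hne : O ≠ O') (hmeet : ¬Disjoint O O') : (commonTransversals L).Infinite := by
  obtain ⟨hO2, hOL⟩ := hO
  obtain ⟨hO'2, hO'L⟩ := hO'
  have hpoint : finrank K ↥(O ⊓ O') ≤ 1 := by
    have := finrank_inf_lt_of_ne (hO2.trans hO'2.symm) hne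
    omega
  have hplane : finrank K ↥(O ⊔ O') ≤ 3 := by
    have := finrank_sup_add_finrank_inf_eq O O'
    have := one_le_finrank_iff.2 (disjoint_iff.not.1 hmeet)
    omega
  obtain ⟨p, ⟨hpO, hpO'⟩, hp0⟩ := (Submodule.ne_bot_iff _).1 (disjoint_iff.not.1 hmeet)
  have hO'O : ¬O' ≤ O := fun h =>
    hne (eq_of_le_of_finrank_eq h (hO'2.trans hO2.symm)).symm
  refine (infinite_setOf_mem_le_sup hO2 hO'O hpO hp0).mono ?_
  rintro W ⟨hW, hpW, hWH⟩
  refine ⟨hW, fun i => ?_⟩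
  rcases inf_le_or_le_sup_of_inf_ne_bot hpoint (hL i) (hOL i) (hO'L i) with h | h
  · exact (Submodule.ne_bot_iff _).2 ⟨p, ⟨hpW, h ⟨hpO, hpO'⟩⟩, hp0⟩
  · refine inf_ne_bot_of_finrank_sup_lt ?_
    rw [hW, hL i]
    have := finrank_mono (sup_le hWH h)
    omega

namespace Submodule

theorem inf_sup_inf_eq_self [FiniteDimensional K V] {O₁ O₂ L : Submodule K V}
    (h : Disjoint O₁ O₂) (hL : finrank K L ≤ 2) (h₁ : O₁ ⊓ L ≠ ⊥) (h₂ : O₂ ⊓ L ≠ ⊥) :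
    O₁ ⊓ L ⊔ O₂ ⊓ L = L := by
  refine eq_of_le_of_finrank_le (sup_le inf_le_right inf_le_right) ?_
  have hmeet : O₁ ⊓ L ⊓ (O₂ ⊓ L) = ⊥ :=
    eq_bot_iff.2 ((inf_le_inf inf_le_left inf_le_left).trans h.le_bot)
  have := finrank_sup_add_finrank_inf_eq (O₁ ⊓ L) (O₂ ⊓ L)
  rw [hmeet, finrank_bot] at this
  have := one_le_finrank_iff.2 h₁
  have := one_le_finrank_iff.2 h₂
  omega

theorem projection_mem_of_inf_ne_bot [FiniteDimensional K V] {O₁ O₂ L : Submodule K V}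
    (h : IsCompl O₁ O₂) (hL : finrank K L ≤ 2) (h₁ : O₁ ⊓ L ≠ ⊥) (h₂ : O₂ ⊓ L ≠ ⊥)
    {x : V} (hx : x ∈ L) : O₁.projection O₂ h x ∈ L := by
  rw [← inf_sup_inf_eq_self h.disjoint hL h₁ h₂] at hx
  obtain ⟨a, ⟨ha₁, haL⟩, b, ⟨hb₂, -⟩, rfl⟩ := mem_sup.1 hx
  rwa [map_add, projection_apply_of_mem_left h ha₁, projection_apply_of_mem_right h hb₂, add_zero]

section Regulus

variable {O₁ O₂ : Submodule K V} (h : IsCompl O₁ O₂)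

noncomputable def regulusMap (r : K) : V →ₗ[K] V :=
  O₁.projection O₂ h + r • O₂.projection O₁ h.symm

/-- For `O₃` skew to `O₁` and `O₂` and of the same dimension, `r = 0` gives `O₁`, `r = 1` gives
`O₃`, and `O₂` is the limit `r → ∞`. -/
noncomputable def regulusLine (O₃ : Submodule K V) (r : K) : Submodule K V :=
  O₃.map (regulusMap h r)

theorem projection_regulusMap_left (r : K) (x : V) :
    O₁.projection O₂ h (regulusMap h r x) = O₁.projection O₂ h x := by
  simp [regulusMap, projection_apply_of_mem_left h (projection_apply_mem h x),
    projection_apply_of_mem_right h (projection_apply_mem h.symm x)]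

theorem projection_regulusMap_right (r : K) (x : V) :
    O₂.projection O₁ h.symm (regulusMap h r x) = r • O₂.projection O₁ h.symm x := by
  simp [regulusMap, projection_apply_of_mem_left h.symm (projection_apply_mem h.symm x),
    projection_apply_of_mem_right h.symm (projection_apply_mem h x)]

variable {O₃ : Submodule K V}

theorem eq_of_regulusMap_eq (h₃ : Disjoint O₃ O₂) {r s : K} {x y : V} (hx : x ∈ O₃) (hy : y ∈ O₃)
    (hxy : regulusMap h r x = regulusMap h s y) : x = y := by
  have hπ : O₁.projection O₂ h (x - y) = 0 := by
    rw [map_sub, ← projection_regulusMap_left h r, hxy, projection_regulusMap_left, sub_self]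
  exact sub_eq_zero.1 (disjoint_def.1 h₃ _ (sub_mem hx hy) ((projection_apply_eq_zero_iff h).1 hπ))

theorem finrank_regulusLine [FiniteDimensional K V] (h₃ : Disjoint O₃ O₂) (r : K) :
    finrank K (regulusLine h O₃ r) = finrank K O₃ := by
  have hinj : Function.Injective (regulusMap h r ∘ₗ O₃.subtype) := fun x y hxy =>
    Subtype.ext (eq_of_regulusMap_eq h h₃ x.2 y.2 hxy)
  rw [← LinearMap.finrank_range_of_inj hinj, LinearMap.range_comp, range_subtype, regulusLine]

theorem regulusLine_injective (h₁ : Disjoint O₃ O₁) (h₂ : Disjoint O₃ O₂) (h₀ : O₃ ≠ ⊥) :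
    Function.Injective (regulusLine h O₃) := by
  intro r s hrs
  obtain ⟨x, hx, hx0⟩ := (Submodule.ne_bot_iff _).1 h₀
  obtain ⟨y, hy, hxy⟩ := mem_map.1 (hrs ▸ mem_map_of_mem hx : regulusMap h r x ∈ regulusLine h O₃ s)
  obtain rfl := (eq_of_regulusMap_eq h h₂ hy hx hxy).symm
  have hπ₂ : O₂.projection O₁ h.symm x ≠ 0 := fun h0 =>
    hx0 (disjoint_def.1 h₁ x hx ((projection_apply_eq_zero_iff h.symm).1 h0))
  have := congrArg (O₂.projection O₁ h.symm) hxy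
  rw [projection_regulusMap_right, projection_regulusMap_right] at this
  exact (smul_left_injective K hπ₂ this).symm

theorem regulusLine_inf_ne_bot [FiniteDimensional K V] (h₃ : Disjoint O₃ O₂) {L : Submodule K V}
    (hL : finrank K L ≤ 2) (hL₁ : O₁ ⊓ L ≠ ⊥) (hL₂ : O₂ ⊓ L ≠ ⊥) (hL₃ : O₃ ⊓ L ≠ ⊥) (r : K) :
    regulusLine h O₃ r ⊓ L ≠ ⊥ := by
  obtain ⟨w, ⟨hw₃, hwL⟩, hw0⟩ := (Submodule.ne_bot_iff _).1 hL₃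
  refine (Submodule.ne_bot_iff _).2 ⟨regulusMap h r w, ⟨mem_map_of_mem hw₃, ?_⟩, fun h0 => ?_⟩
  · exact add_mem (projection_mem_of_inf_ne_bot h hL hL₁ hL₂ hwL)
      (smul_mem _ _ (projection_mem_of_inf_ne_bot h.symm hL hL₂ hL₁ hwL))
  · exact hw0 (eq_of_regulusMap_eq h h₃ hw₃ (zero_mem _)
      (h0.trans (map_zero (regulusMap h r)).symm))

end Regulus

end Submodule

theorem commonTransversals_infinite_of_pairwise_disjoint [FiniteDimensional K V] [Infinite K]
    {ι : Type*} {L : ι → Submodule K V} (hL : ∀ i, finrank K (L i) = 2)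
    {O₁ O₂ O₃ : Submodule K V} (hO₁ : O₁ ∈ commonTransversals L)
    (hO₂ : O₂ ∈ commonTransversals L) (hO₃ : O₃ ∈ commonTransversals L) (h₁₂ : IsCompl O₁ O₂)
    (h₁₃ : Disjoint O₁ O₃) (h₂₃ : Disjoint O₂ O₃) : (commonTransversals L).Infinite := by
  have h₀ : O₃ ≠ ⊥ := by
    rintro rfl
    simpa using hO₃.1
  refine Set.infinite_of_injective_forall_mem (regulusLine_injective h₁₂ h₁₃.symm h₂₃.symm h₀)
    fun r => ⟨(finrank_regulusLine h₁₂ h₂₃.symm r).trans hO₃.1, fun i => ?_⟩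
  exact regulusLine_inf_ne_bot h₁₂ h₂₃.symm (hL i).le (hO₁.2 i) (hO₂.2 i) (hO₃.2 i) r

/-- Lines L₁,…,L_k in ℙ³ have infinitely many common transversals if and
only if they have at least three distinct common transversals.

Lines are 2-dimensional linear subspaces of ℂ⁴; a common transversal is a line meeting
each L_i, i.e. a 2-dimensional subspace intersecting each L_i nontrivially. -/
theorem stmt_13 (k : ℕ) (L : Fin k → Submodule ℂ (Fin 4 → ℂ))
    (hL : ∀ i, Module.finrank ℂ (L i) = 2) :
    {W : Submodule ℂ (Fin 4 → ℂ) |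
        Module.finrank ℂ W = 2 ∧ ∀ i, W ⊓ L i ≠ ⊥}.Infinite
      ↔ ∃ O₁ O₂ O₃ : Submodule ℂ (Fin 4 → ℂ),
          O₁ ∈ {W : Submodule ℂ (Fin 4 → ℂ) |
                  Module.finrank ℂ W = 2 ∧ ∀ i, W ⊓ L i ≠ ⊥} ∧
          O₂ ∈ {W : Submodule ℂ (Fin 4 → ℂ) |
                  Module.finrank ℂ W = 2 ∧ ∀ i, W ⊓ L i ≠ ⊥} ∧
          O₃ ∈ {W : Submodule ℂ (Fin 4 → ℂ) |
                  Module.finrank ℂ W = 2 ∧ ∀ i, W ⊓ L i ≠ ⊥} ∧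
          O₁ ≠ O₂ ∧ O₁ ≠ O₃ ∧ O₂ ≠ O₃ := by
  change (commonTransversals L).Infinite ↔ ∃ O₁ O₂ O₃, O₁ ∈ commonTransversals L ∧
    O₂ ∈ commonTransversals L ∧ O₃ ∈ commonTransversals L ∧ O₁ ≠ O₂ ∧ O₁ ≠ O₃ ∧ O₂ ≠ O₃
  constructor
  · intro h
    obtain ⟨O₁, h₁, O₂, h₂, h₁₂⟩ := h.nontrivial
    obtain ⟨O₃, h₃, h₃₁₂⟩ := (h.sdiff (Set.toFinite {O₁, O₂})).nonempty
    simp only [Set.mem_insert_iff, Set.mem_singleton_iff, not_or] at h₃₁₂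
    exact ⟨O₁, O₂, O₃, h₁, h₂, h₃, h₁₂, Ne.symm h₃₁₂.1, Ne.symm h₃₁₂.2⟩
  · rintro ⟨O₁, O₂, O₃, h₁, h₂, h₃, h₁₂, h₁₃, h₂₃⟩
    by_cases d₁₂ : Disjoint O₁ O₂
    · by_cases d₁₃ : Disjoint O₁ O₃
      · by_cases d₂₃ : Disjoint O₂ O₃
        · have hc : IsCompl O₁ O₂ := (isCompl_iff_disjoint _ _ (by simp [h₁.1, h₂.1])).2 d₁₂
          exact commonTransversals_infinite_of_pairwise_disjoint hL h₁ h₂ h₃ hc d₁₃ d₂₃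
        · exact commonTransversals_infinite_of_not_disjoint hL h₂ h₃ h₂₃ d₂₃
      · exact commonTransversals_infinite_of_not_disjoint hL h₁ h₃ h₁₃ d₁₃
    · exact commonTransversals_infinite_of_not_disjoint hL h₁ h₂ h₁₂ d₁₂
end

section
/- Let C = (C₁,…,C_m) be an arrangement of pinhole cameras with distinct centers, and let V_C = {ℓ ∈ (P^2)^m : rank [C₁^T ℓ₁ | ⋯ | C_m^T ℓ_m] ≤ 2} and U_C = {h ∈ (P^3)^m : rank [h₁ | ⋯ | h_m] ≤ 2 and c_i^T h_i = 0 for all i}. Then the maps ℓ_i ↦ C_i^T ℓ_i and h_i ↦ (C_i^T)^† h_i are mutually inverse regular maps, so V_C and U_C are isomorphic varieties. -/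
/-!
`ψ ∘ φ = id` because `(C Cᵀ)⁻¹ C Cᵀ = 1`. Conversely `Cᵀ (C Cᵀ)⁻¹ C` is the projection onto the
row space of `C`, which is the plane `c^⊥` of covectors vanishing at the center, since `c` spans
`ker C`; so `φ ∘ ψ = id` on tuples of planes through the centers. Both maps then preserve the
nonvanishing and rank conditions because the matrix of back-projected planes is unchanged.
-/

open Matrix

namespace Matrix

variable {K m n : Type*} [Field K] [Fintype m] [Fintype n]

/-- The hypotheses say that `c` spans `ker A`; its annihilator `c^⊥` contains the row space
and has the same dimension. -/
theorem range_transpose_mulVecLin_eq_ker_dotProduct [DecidableEq n] {A : Matrix m n K}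
    {c : n → K} (hrank : A.rank + 1 = Fintype.card n) (hc : c ≠ 0) (hAc : A *ᵥ c = 0) :
    LinearMap.range Aᵀ.mulVecLin = LinearMap.ker (dotProductEquiv K n c) := by
  have hle : LinearMap.range Aᵀ.mulVecLin ≤ LinearMap.ker (dotProductEquiv K n c) := by
    rintro _ ⟨x, rfl⟩
    rw [LinearMap.mem_ker, dotProductEquiv_apply_apply, mulVecLin_apply, mulVec_transpose,
      dotProduct_comm, ← dotProduct_mulVec, hAc, dotProduct_zero]
  refine Submodule.eq_of_le_of_finrank_le hle ?_
  have hker := Module.Dual.finrank_ker_add_one_of_ne_zero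
    ((dotProductEquiv K n).map_ne_zero_iff.mpr hc)
  have hrange : Module.finrank K (LinearMap.range Aᵀ.mulVecLin) = A.rank := A.rank_transpose
  rw [Module.finrank_fintype_fun_eq_card] at hker
  omega

variable [DecidableEq m]

theorem mul_transpose_inv_mulVec_mulVec_transpose_mulVec {A : Matrix m n K}
    (hA : IsUnit (A * Aᵀ).det) (x : m → K) : (A * Aᵀ)⁻¹ *ᵥ (A *ᵥ (Aᵀ *ᵥ x)) = x := by
  rw [mulVec_mulVec, mulVec_mulVec, Matrix.mul_assoc, nonsing_inv_mul _ hA, one_mulVec]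

theorem transpose_mulVec_mul_transpose_inv_mulVec_mulVec [DecidableEq n] {A : Matrix m n K}
    {c : n → K} (hrank : A.rank + 1 = Fintype.card n) (hc : c ≠ 0) (hAc : A *ᵥ c = 0)
    (hA : IsUnit (A * Aᵀ).det) {h : n → K} (hh : c ⬝ᵥ h = 0) :
    Aᵀ *ᵥ ((A * Aᵀ)⁻¹ *ᵥ (A *ᵥ h)) = h := by
  have hmem : h ∈ LinearMap.range Aᵀ.mulVecLin := by
    rw [range_transpose_mulVecLin_eq_ker_dotProduct hrank hc hAc]
    exact hh
  obtain ⟨x, rfl⟩ := hmem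
  rw [mulVecLin_apply, mul_transpose_inv_mulVec_mulVec_transpose_mulVec hA]

end Matrix

theorem stmt_17_general (m : ℕ) (C : Fin m → Matrix (Fin 3) (Fin 4) ℂ)
    (hrank : ∀ i, (C i).rank = 3)
    (c : Fin m → Fin 4 → ℂ) (hc0 : ∀ i, c i ≠ 0) (hker : ∀ i, (C i) *ᵥ (c i) = 0)
    (hinv : ∀ i, IsUnit ((C i) * (C i)ᵀ).det) :
    let φ : (Fin m → Fin 3 → ℂ) → (Fin m → Fin 4 → ℂ) := fun ℓ i => (C i)ᵀ *ᵥ ℓ i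
    let ψ : (Fin m → Fin 4 → ℂ) → (Fin m → Fin 3 → ℂ) :=
      fun h i => ((C i) * (C i)ᵀ)⁻¹ *ᵥ ((C i) *ᵥ h i)
    let Vc : Set (Fin m → Fin 3 → ℂ) :=
      {ℓ | (∀ i, ℓ i ≠ 0) ∧
        (Matrix.of fun (r : Fin 4) (i : Fin m) => ((C i)ᵀ *ᵥ ℓ i) r).rank ≤ 2}
    let Uc : Set (Fin m → Fin 4 → ℂ) :=
      {h | (∀ i, h i ≠ 0) ∧
        (Matrix.of fun (r : Fin 4) (i : Fin m) => h i r).rank ≤ 2 ∧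
        ∀ i, c i ⬝ᵥ h i = 0}
    Set.MapsTo φ Vc Uc ∧ Set.MapsTo ψ Uc Vc ∧
      (∀ ℓ ∈ Vc, ψ (φ ℓ) = ℓ) ∧ (∀ h ∈ Uc, φ (ψ h) = h) := by
  intro φ ψ Vc Uc
  have hψφ (ℓ : Fin m → Fin 3 → ℂ) : ψ (φ ℓ) = ℓ :=
    funext fun i => mul_transpose_inv_mulVec_mulVec_transpose_mulVec (hinv i) (ℓ i)
  have hφψ (h : Fin m → Fin 4 → ℂ) (hh : ∀ i, c i ⬝ᵥ h i = 0) : φ (ψ h) = h :=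
    funext fun i => transpose_mulVec_mul_transpose_inv_mulVec_mulVec
      (by simp [hrank i]) (hc0 i) (hker i) (hinv i) (hh i)
  refine ⟨?_, ?_, fun ℓ _ => hψφ ℓ, fun h ⟨_, _, hh⟩ => hφψ h hh⟩
  · rintro ℓ ⟨hne, hr⟩
    refine ⟨fun i h0 => hne i ?_, hr, fun i => ?_⟩
    · rw [← hψφ ℓ]
      simp only [ψ, h0, mulVec_zero]
    · simp only [φ, dotProduct_mulVec, vecMul_transpose, hker i, zero_dotProduct]
  · rintro h ⟨hne, hr, hh⟩
    refine ⟨fun i h0 => hne i ?_, ?_⟩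
    · rw [← hφψ h hh]
      simp only [φ, h0, mulVec_zero]
    · simpa only [← congrFun (hφψ h hh)] using hr

/-- For an arrangement C = (C₁,…,C_m) of pinhole cameras with distinct
centers, the maps ℓᵢ ↦ Cᵢᵀℓᵢ and hᵢ ↦ (Cᵢᵀ)†hᵢ = (CᵢCᵢᵀ)⁻¹Cᵢhᵢ are mutually inverse
regular maps between the determinantal variety V_C (tuples of image-line equations whose
back-projected planes [Cᵢᵀℓᵢ] form a matrix of rank ≤ 2) and the variety U_C of tuples
of back-projected planes (rank ≤ 2, each plane through the corresponding center), so
V_C and U_C are isomorphic.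

Points of ℙ² and ℙ³ are represented by nonzero vectors; the pseudo-inverse
(Cᵢᵀ)† = (CᵢCᵢᵀ)⁻¹Cᵢ requires CᵢCᵢᵀ to be invertible. -/
theorem stmt_17 (m : ℕ) (C : Fin m → Matrix (Fin 3) (Fin 4) ℂ)
    (hrank : ∀ i, (C i).rank = 3)
    (c : Fin m → Fin 4 → ℂ) (hc0 : ∀ i, c i ≠ 0) (hker : ∀ i, (C i) *ᵥ (c i) = 0)
    (hdist : ∀ i j, i ≠ j → ∀ t : ℂ, c j ≠ t • c i)
    (hinv : ∀ i, IsUnit ((C i) * (C i)ᵀ).det) :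
    let φ : (Fin m → Fin 3 → ℂ) → (Fin m → Fin 4 → ℂ) := fun ℓ i => (C i)ᵀ *ᵥ ℓ i
    let ψ : (Fin m → Fin 4 → ℂ) → (Fin m → Fin 3 → ℂ) :=
      fun h i => ((C i) * (C i)ᵀ)⁻¹ *ᵥ ((C i) *ᵥ h i)
    let Vc : Set (Fin m → Fin 3 → ℂ) :=
      {ℓ | (∀ i, ℓ i ≠ 0) ∧
        (Matrix.of fun (r : Fin 4) (i : Fin m) => ((C i)ᵀ *ᵥ ℓ i) r).rank ≤ 2}
    let Uc : Set (Fin m → Fin 4 → ℂ) :=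
      {h | (∀ i, h i ≠ 0) ∧
        (Matrix.of fun (r : Fin 4) (i : Fin m) => h i r).rank ≤ 2 ∧
        ∀ i, c i ⬝ᵥ h i = 0}
    Set.MapsTo φ Vc Uc ∧ Set.MapsTo ψ Uc Vc ∧
      (∀ ℓ ∈ Vc, ψ (φ ℓ) = ℓ) ∧ (∀ h ∈ Uc, φ (ψ h) = h) :=
  stmt_17_general m C hrank c hc0 hker hinv
end

section
/- Let C be an arrangement of m ≥ 2 pinhole cameras with distinct centers and let L be a line in P^3 not through any center, with ℓ = Υ_C(L) its tuple of image lines and M(ℓ) = [C₁^T ℓ₁ | ⋯ | C_m^T ℓ_m]. If rank M(ℓ) = 2 then Υ_C^{-1}(ℓ) = {L}; if rank M(ℓ) = 1 then Υ_C^{-1}(ℓ) is infinite. -/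
/-! The conditions on `W` say exactly that `W` lies in `K = ker Mᵀ`, the intersection of the
back-projected planes, and `dim K = 4 - rank M`. If `rank M = 2`, then `K` is itself a line and
hence the only one. If `rank M = 1`, then `K` is a plane, and the kernels of the functionals
`x ↦ ∑ⱼ tʲ xⱼ` (coordinates in a basis of `K`) are pairwise distinct lines in it; a nonzero
center gives a nonzero polynomial in `t`, so it lies on only finitely many of them. -/

open Matrix Module Polynomial

namespace Module.Basis

variable {K E : Type*} [Field K] [AddCommGroup E] [Module K E] {n : ℕ}

noncomputable def momentForm (b : Basis (Fin n) K E) (t : K) : Dual K E :=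
  ∑ j : Fin n, t ^ (j : ℕ) • b.coord j

variable (b : Basis (Fin n) K E)

theorem momentForm_apply_self (t : K) (k : Fin n) : b.momentForm t (b k) = t ^ (k : ℕ) := by
  simp [momentForm, Finsupp.single_apply]

theorem momentForm_apply (t : K) (x : E) :
    b.momentForm t x = (∑ j, C (b.repr x j) * X ^ (j : ℕ)).eval t := by
  simp only [momentForm, LinearMap.coe_sum, Finset.sum_apply, LinearMap.smul_apply, coord_apply,
    smul_eq_mul, eval_finsetSum, eval_mul, eval_C, eval_pow, eval_X, mul_comm]

theorem finite_setOf_momentForm_apply_eq_zero {x : E} (hx : x ≠ 0) :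
    {t | b.momentForm t x = 0}.Finite := by
  have hP : ∑ j, C (b.repr x j) * X ^ (j : ℕ) ≠ 0 := by
    intro hP
    apply hx
    refine b.repr.map_eq_zero_iff.mp (Finsupp.ext fun k => ?_)
    simpa [finsetSum_coeff, coeff_C_mul_X_pow, Fin.val_inj] using congrArg (coeff · k) hP
  simpa only [momentForm_apply, IsRoot.def] using finite_setOfPred_isRoot hP

theorem momentForm_ne_zero (hn : 0 < n) (t : K) : b.momentForm t ≠ 0 := by
  intro h
  simpa [momentForm_apply_self] using LinearMap.congr_fun h (b ⟨0, hn⟩)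

theorem injective_ker_momentForm (hn : 2 ≤ n) :
    Function.Injective fun t => LinearMap.ker (b.momentForm t) := by
  intro t s (hts : LinearMap.ker (b.momentForm t) = LinearMap.ker (b.momentForm s))
  let w := b ⟨1, by omega⟩ - t • b ⟨0, by omega⟩
  have hw : ∀ r, b.momentForm r w = r - t := fun r => by simp [w, momentForm_apply_self]
  have hws : w ∈ LinearMap.ker (b.momentForm s) := by
    rw [← hts, LinearMap.mem_ker, hw, sub_self]
  rw [LinearMap.mem_ker, hw, sub_eq_zero] at hws
  exact hws.symm

end Module.Basis

section Hyperplanes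

variable {K V ι : Type*} [Field K] [Infinite K] [AddCommGroup V] [Module K V] [Finite ι]

theorem infinite_setOf_hyperplane_forall_notMem [FiniteDimensional K V]
    (hV : 2 ≤ finrank K V) (y : ι → V) (hy : ∀ i, y i ≠ 0) :
    {H : Submodule K V | finrank K H + 1 = finrank K V ∧ ∀ i, y i ∉ H}.Infinite := by
  let b := Module.finBasis K V
  have hgood : {t | ∀ i, b.momentForm t (y i) ≠ 0}.Infinite := by
    simpa only [Set.compl_iUnion, Set.compl_ofPred, Set.iInter_ofPred, ne_eq] using
      (Set.finite_iUnion fun i => b.finite_setOf_momentForm_apply_eq_zero (hy i)).infinite_compl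
  refine (hgood.image (b.injective_ker_momentForm hV).injOn).mono ?_
  rintro _ ⟨t, ht, rfl⟩
  exact ⟨Dual.finrank_ker_add_one_of_ne_zero (b.momentForm_ne_zero (by omega) t), ht⟩

theorem Submodule.infinite_setOf_hyperplane_le_forall_notMem (U : Submodule K V)
    (hU : 2 ≤ finrank K U) (c : ι → V) (hc : ∀ i, c i ≠ 0) :
    {W : Submodule K V | finrank K W + 1 = finrank K U ∧ W ≤ U ∧ ∀ i, c i ∉ W}.Infinite := by
  have : FiniteDimensional K U := Module.finite_of_finrank_pos (by omega)
  let y : {i // c i ∈ U} → U := fun i => ⟨c i, i.2⟩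
  have hyperplanes := infinite_setOf_hyperplane_forall_notMem hU y
    fun i => by simpa [y, Subtype.ext_iff] using hc i
  refine (hyperplanes.image (Submodule.map_injective_of_injective U.injective_subtype).injOn).mono ?_
  rintro _ ⟨H, ⟨hH, hyH⟩, rfl⟩
  refine ⟨by rwa [Submodule.finrank_map_subtype_eq], U.map_subtype_le H, ?_⟩
  rintro i ⟨z, hz, hzc⟩
  exact hyH ⟨i, hzc ▸ z.2⟩ (by simpa [y, ← hzc] using hz)

end Hyperplanes

theorem Matrix.rank_add_finrank_ker_mulVecLin {m n K : Type*} [Fintype n] [Field K]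
    (A : Matrix m n K) : A.rank + finrank K (LinearMap.ker A.mulVecLin) = Fintype.card n := by
  simpa [Matrix.rank] using LinearMap.finrank_range_add_finrank_ker A.mulVecLin

theorem stmt_18_general (m : ℕ) (C : Fin m → Matrix (Fin 3) (Fin 4) ℂ)
    (c : Fin m → Fin 4 → ℂ) (hc0 : ∀ i, c i ≠ 0)
    (L : Submodule ℂ (Fin 4 → ℂ)) (hL : Module.finrank ℂ L = 2)
    (hLc : ∀ i, c i ∉ L)
    (ℓ : Fin m → Fin 3 → ℂ)
    (himg : ∀ i, ∀ p ∈ L, ((C i) *ᵥ p) ⬝ᵥ ℓ i = 0) :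
    ((Matrix.of fun (r : Fin 4) (i : Fin m) => ((C i)ᵀ *ᵥ ℓ i) r).rank = 2 →
      {W : Submodule ℂ (Fin 4 → ℂ) | Module.finrank ℂ W = 2 ∧ (∀ i, c i ∉ W) ∧
        ∀ i, ∀ p ∈ W, ((C i) *ᵥ p) ⬝ᵥ ℓ i = 0} = {L}) ∧
    ((Matrix.of fun (r : Fin 4) (i : Fin m) => ((C i)ᵀ *ᵥ ℓ i) r).rank = 1 →
      {W : Submodule ℂ (Fin 4 → ℂ) | Module.finrank ℂ W = 2 ∧ (∀ i, c i ∉ W) ∧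
        ∀ i, ∀ p ∈ W, ((C i) *ᵥ p) ⬝ᵥ ℓ i = 0}.Infinite) := by
  set M := Matrix.of fun (r : Fin 4) (i : Fin m) => ((C i)ᵀ *ᵥ ℓ i) r
  set K := LinearMap.ker Mᵀ.mulVecLin
  have hsol : ∀ W : Submodule ℂ (Fin 4 → ℂ), (∀ i, ∀ p ∈ W, (C i *ᵥ p) ⬝ᵥ ℓ i = 0) ↔ W ≤ K := by
    have hrow : ∀ i p, (Mᵀ *ᵥ p) i = (C i *ᵥ p) ⬝ᵥ ℓ i := fun i p => by
      rw [dotProduct_comm, dotProduct_mulVec, ← mulVec_transpose]; rfl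
    simp only [K, SetLike.le_def, LinearMap.mem_ker, mulVecLin_apply, funext_iff, ← hrow,
      Pi.zero_apply]
    exact fun W => ⟨fun h p hp i => h i p hp, fun h i _ hp => h hp i⟩
  have hK : M.rank + finrank ℂ K = 4 := by
    simpa [rank_transpose] using Mᵀ.rank_add_finrank_ker_mulVecLin
  have hLK : L ≤ K := (hsol L).1 himg
  refine ⟨fun h2 => ?_, fun h1 => ?_⟩
  · have hKL : L = K := Submodule.eq_of_le_of_finrank_eq hLK (by omega)
    ext W
    simp only [Set.mem_ofPred_eq, Set.mem_singleton_iff, hsol]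
    refine ⟨fun ⟨hW, _, hWK⟩ => ?_, fun hW => hW ▸ ⟨hL, hLc, hLK⟩⟩
    exact hKL ▸ Submodule.eq_of_le_of_finrank_eq hWK (by omega)
  · refine (K.infinite_setOf_hyperplane_le_forall_notMem (by omega) c hc0).mono ?_
    rintro W ⟨hW, hWK, hWc⟩
    exact ⟨by omega, hWc, (hsol W).2 hWK⟩

/-- Let C be an arrangement of m ≥ 2 pinhole cameras with distinct
centers, L a line in ℙ³ not through any center, and ℓ = Υ_C(L) its tuple of image-line
equations, with M(ℓ) = [C₁ᵀℓ₁ | ⋯ | C_mᵀℓ_m].  If rank M(ℓ) = 2 then Υ_C⁻¹(ℓ) = {L};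
if rank M(ℓ) = 1 then Υ_C⁻¹(ℓ) is infinite.

Lines in ℙ³ are 2-dimensional subspaces of ℂ⁴; a line W maps to ℓ under Υ_C iff W avoids
all centers and every point p of W projects onto each image line, i.e. (Cᵢp)ᵀℓᵢ = 0. -/
theorem stmt_18 (m : ℕ) (hm : 2 ≤ m) (C : Fin m → Matrix (Fin 3) (Fin 4) ℂ)
    (hrank : ∀ i, (C i).rank = 3)
    (c : Fin m → Fin 4 → ℂ) (hc0 : ∀ i, c i ≠ 0) (hker : ∀ i, (C i) *ᵥ (c i) = 0)
    (hdist : ∀ i j, i ≠ j → ∀ t : ℂ, c j ≠ t • c i)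
    (L : Submodule ℂ (Fin 4 → ℂ)) (hL : Module.finrank ℂ L = 2)
    (hLc : ∀ i, c i ∉ L)
    (ℓ : Fin m → Fin 3 → ℂ) (hℓ0 : ∀ i, ℓ i ≠ 0)
    (himg : ∀ i, ∀ p ∈ L, ((C i) *ᵥ p) ⬝ᵥ ℓ i = 0) :
    ((Matrix.of fun (r : Fin 4) (i : Fin m) => ((C i)ᵀ *ᵥ ℓ i) r).rank = 2 →
      {W : Submodule ℂ (Fin 4 → ℂ) | Module.finrank ℂ W = 2 ∧ (∀ i, c i ∉ W) ∧
        ∀ i, ∀ p ∈ W, ((C i) *ᵥ p) ⬝ᵥ ℓ i = 0} = {L}) ∧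
    ((Matrix.of fun (r : Fin 4) (i : Fin m) => ((C i)ᵀ *ᵥ ℓ i) r).rank = 1 →
      {W : Submodule ℂ (Fin 4 → ℂ) | Module.finrank ℂ W = 2 ∧ (∀ i, c i ∉ W) ∧
        ∀ i, ∀ p ∈ W, ((C i) *ᵥ p) ⬝ᵥ ℓ i = 0}.Infinite) :=
  stmt_18_general m C c hc0 L hL hLc ℓ himg
end
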